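/- Let o : [ω₁]² → ω be such that every level of the tree T(o) = {o(·,β) ↾ α : α ≤ β < ω₁} is countable, set c(α,β) = o(α,β) mod 2, and let τ[X] denote the associated topology on each X ⊆ ω₁. Then for every uncountable X ⊆ ω₁, the product space (X, τ[X]) × (X, τ[X]) contains an uncountable discrete subspace. -/

import Mathlib

/-- The first uncountable ordinal. -/
noncomputable def omega1 : Ordinal := (Cardinal.aleph 1).ord

/-- `W_α = {α} ∪ {β < ω₁ : α < β and c(α,β) = 1}` for the coloring
`c(α,β) = o(α,β) mod 2`. -/
noncomputable def Wset (o : Ordinal → Ordinal → ℕ) (α : Ordinal) : Set Ordinal :=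
  {α} ∪ {β | β < omega1 ∧ α < β ∧ o α β % 2 = 1}

/-- The topology `τ[X]` on `X ⊆ ω₁`: generated by the subbasis consisting of the
sets `W_ξ ∩ X` and `X \ W_ξ` for `ξ ∈ X` (each `W_ξ ∩ X` is declared clopen). -/
noncomputable def tauTop (o : Ordinal → Ordinal → ℕ) (X : Set Ordinal) :
    TopologicalSpace X :=
  TopologicalSpace.generateFrom
    ({s | ∃ ξ ∈ X, s = {x : X | x.val ∈ Wset o ξ}} ∪
     {s | ∃ ξ ∈ X, s = {x : X | x.val ∉ Wset o ξ}})

/-!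
Build, by Zorn's lemma, a maximal family `P` of pairs `α < β` in `X` whose intervals `[α, β]`
are pairwise disjoint and such that whenever `(α, β)` lies below `(α', β')`, the colours
`c(β, α')` and `c(β, β')` agree. If `P` were countable, all its points would lie below some
`γ < ω₁`; since the level `γ` of `T(o)` is countable while `X` is not, two points `γ ≤ α < β`
of `X` have the same restriction `o(·, α) ↾ γ = o(·, β) ↾ γ`, and `(α, β)` could be added to `P`.
So `P` is uncountable, and `(W_α \ W_β) × W_β` isolates `(α, β)` in `P`: a pair `(α', β')` below
`(α, β)` misses `W_α × _`, while for a pair above it `α'` and `β'` lie on the same side of `W_β`.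
-/

open Set Topology

theorem countable_Iio_of_lt_omega1 {γ : Ordinal} (hγ : γ < omega1) : (Iio γ).Countable := by
  rw [← Cardinal.le_aleph0_iff_set_countable, Cardinal.mk_Iio_ordinal, Cardinal.lift_le_aleph0,
    ← Cardinal.lt_aleph_one_iff]
  exact Cardinal.lt_ord.1 hγ

theorem Set.Countable.exists_lt_omega1_forall_lt {S : Set Ordinal} (hS : S.Countable)
    (hS₁ : S ⊆ Iio omega1) : ∃ γ < omega1, ∀ x ∈ S, x < γ := by
  have := hS.to_subtype
  have hsucc : ∀ x : S, Order.succ x.val < omega1 := fun x =>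
    (Cardinal.isSuccLimit_ord (Cardinal.aleph0_le_aleph 1)).succ_lt (hS₁ x.prop)
  refine ⟨⨆ x : S, Order.succ x.val, ?_, fun x hx => ?_⟩
  · rw [omega1, Cardinal.ord_aleph] at hsucc ⊢
    exact Ordinal.iSup_lt_omega_one hsucc
  · exact (Order.lt_succ x).trans_le (Ordinal.le_iSup (fun x : S => Order.succ x.val) ⟨x, hx⟩)

theorem Set.exists_lt_eq_of_mapsTo_countable {α β : Type*} [LinearOrder α] {s : Set α}
    {t : Set β} {f : α → β} (hs : ¬ s.Countable) (hf : MapsTo f s t) (ht : t.Countable) :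
    ∃ a ∈ s, ∃ b ∈ s, a < b ∧ f a = f b := by
  by_contra! h
  refine hs (hf.countable_of_injOn (fun a ha b hb hab => ?_) ht)
  rcases lt_trichotomy a b with hlt | heq | hgt
  · exact absurd hab (h a ha b hb hlt)
  · exact heq
  · exact absurd hab.symm (h b hb a ha hgt)

/-- The `α`-th level of the tree `T(o)`. -/
def treeLevel (o : Ordinal → Ordinal → ℕ) (α : Ordinal) : Set (Iio α → ℕ) :=
  {g | ∃ β : Ordinal, α ≤ β ∧ β < omega1 ∧ ∀ ξ : Iio α, g ξ = o ξ.val β}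

theorem exists_lt_forall_eq_of_countable_treeLevel {o : Ordinal → Ordinal → ℕ} {γ : Ordinal}
    (hγ : γ < omega1) (hlev : (treeLevel o γ).Countable) {X : Set Ordinal}
    (hX : X ⊆ Iio omega1) (hXu : ¬ X.Countable) :
    ∃ a ∈ X, ∃ b ∈ X, γ ≤ a ∧ a < b ∧ ∀ ξ < γ, o ξ a = o ξ b := by
  have hXγ : ¬ (X \ Iio γ).Countable := fun h =>
    hXu <| (h.union (countable_Iio_of_lt_omega1 hγ)).mono <| by
      rw [sdiff_union_self]; exact subset_union_left
  have hmaps : MapsTo (fun β (ξ : Iio γ) => o ξ.val β) (X \ Iio γ) (treeLevel o γ) :=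
    fun β hβ => ⟨β, not_lt.1 hβ.2, hX hβ.1, fun _ => rfl⟩
  obtain ⟨a, ha, b, hb, hab, heq⟩ := exists_lt_eq_of_mapsTo_countable hXγ hmaps hlev
  exact ⟨a, ha.1, b, hb.1, not_lt.1 ha.2, hab, fun ξ hξ => congrFun heq ⟨ξ, hξ⟩⟩

def CoherentlyBelow (o : Ordinal → Ordinal → ℕ) (p q : Ordinal × Ordinal) : Prop :=
  p.2 < q.1 ∧ o p.2 q.1 % 2 = o p.2 q.2 % 2

def IsCoherentFamily (o : Ordinal → Ordinal → ℕ) (X : Set Ordinal)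
    (P : Set (Ordinal × Ordinal)) : Prop :=
  (∀ p ∈ P, p.1 ∈ X ∧ p.2 ∈ X ∧ p.1 < p.2) ∧
    P.Pairwise fun p q => CoherentlyBelow o p q ∨ CoherentlyBelow o q p

section CoherentFamily

variable {o : Ordinal → Ordinal → ℕ} {X : Set Ordinal}

theorem IsCoherentFamily.sUnion_of_isChain {C : Set (Set (Ordinal × Ordinal))}
    (hC : ∀ P ∈ C, IsCoherentFamily o X P) (hchain : IsChain (· ⊆ ·) C) :
    IsCoherentFamily o X (⋃₀ C) :=
  ⟨fun _ ⟨P, hP, hp⟩ => (hC P hP).1 _ hp,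
    (pairwise_sUnion hchain.directedOn).2 fun P hP => (hC P hP).2⟩

theorem IsCoherentFamily.insert {P : Set (Ordinal × Ordinal)} (hP : IsCoherentFamily o X P)
    {γ a b : Ordinal} (hPγ : ∀ p ∈ P, p.2 < γ) (ha : a ∈ X) (hb : b ∈ X) (hγa : γ ≤ a)
    (hab : a < b) (hagree : ∀ ξ < γ, o ξ a = o ξ b) :
    IsCoherentFamily o X (insert (a, b) P) := by
  have hbelow : ∀ p ∈ P, CoherentlyBelow o p (a, b) := fun p hp =>
    ⟨(hPγ p hp).trans_le hγa, by rw [hagree p.2 (hPγ p hp)]⟩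
  refine ⟨?_, pairwise_insert.2
    ⟨hP.2, fun p hp _ => ⟨Or.inr (hbelow p hp), Or.inl (hbelow p hp)⟩⟩⟩
  rintro p (rfl | hp)
  exacts [⟨ha, hb, hab⟩, hP.1 p hp]

theorem exists_uncountable_isCoherentFamily (hlev : ∀ α < omega1, (treeLevel o α).Countable)
    (hX : X ⊆ Iio omega1) (hXu : ¬ X.Countable) :
    ∃ P, IsCoherentFamily o X P ∧ ¬ P.Countable := by
  obtain ⟨P, hP⟩ := zorn_subset {P | IsCoherentFamily o X P} fun C hC hchain =>
    ⟨⋃₀ C, IsCoherentFamily.sUnion_of_isChain hC hchain, fun _ => subset_sUnion_of_mem⟩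
  refine ⟨P, hP.prop, fun hPc => ?_⟩
  obtain ⟨γ, hγ, hPγ⟩ := (hPc.image Prod.snd).exists_lt_omega1_forall_lt
    (by rintro _ ⟨p, hp, rfl⟩; exact hX (hP.prop.1 p hp).2.1)
  obtain ⟨a, ha, b, hb, hγa, hab, hagree⟩ :=
    exists_lt_forall_eq_of_countable_treeLevel hγ (hlev γ hγ) hX hXu
  have hPγ' : ∀ p ∈ P, p.2 < γ := fun p hp => hPγ _ (mem_image_of_mem _ hp)
  have hins := hP.2 (hP.prop.insert hPγ' ha hb hγa hab hagree) (subset_insert _ _)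
  exact (hPγ' _ (hins (mem_insert _ _))).not_ge (hγa.trans hab.le)

end CoherentFamily

section Topology

theorem mem_Wset_self (o : Ordinal → Ordinal → ℕ) (ξ : Ordinal) : ξ ∈ Wset o ξ :=
  Or.inl rfl

variable {o : Ordinal → Ordinal → ℕ}

theorem le_of_mem_Wset {ξ x : Ordinal} (hx : x ∈ Wset o ξ) : ξ ≤ x := by
  rcases hx with rfl | ⟨-, hξx, -⟩
  exacts [le_rfl, hξx.le]

theorem mem_Wset_iff_of_lt {ξ x : Ordinal} (hξx : ξ < x) (hx : x < omega1) :
    x ∈ Wset o ξ ↔ o ξ x % 2 = 1 := by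
  simp [Wset, hξx, hx, hξx.ne']

variable {X : Set Ordinal}

theorem isOpen_setOf_mem_Wset {ξ : Ordinal} (hξ : ξ ∈ X) :
    IsOpen[tauTop o X] {x : X | x.val ∈ Wset o ξ} :=
  .basic _ (Or.inl ⟨ξ, hξ, rfl⟩)

theorem isOpen_setOf_notMem_Wset {ξ : Ordinal} (hξ : ξ ∈ X) :
    IsOpen[tauTop o X] {x : X | x.val ∉ Wset o ξ} :=
  .basic _ (Or.inr ⟨ξ, hξ, rfl⟩)

theorem IsCoherentFamily.discreteTopology {P : Set (Ordinal × Ordinal)}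
    (hP : IsCoherentFamily o X P) (hX : X ⊆ Iio omega1) :
    letI : TopologicalSpace X := tauTop o X
    DiscreteTopology {d : X × X | (d.1.val, d.2.val) ∈ P} := by
  let : TopologicalSpace X := tauTop o X
  rw [discreteTopology_subtype_iff']
  rintro ⟨⟨a, ha⟩, ⟨b, hb⟩⟩ hab
  have hab' : a < b := (hP.1 _ hab).2.2
  refine ⟨{x : X | x.val ∈ Wset o a ∧ x.val ∉ Wset o b} ×ˢ {x : X | x.val ∈ Wset o b},
    ((isOpen_setOf_mem_Wset ha).inter (isOpen_setOf_notMem_Wset hb)).prod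
      (isOpen_setOf_mem_Wset hb), ?_⟩
  ext ⟨⟨a', ha'⟩, ⟨b', hb'⟩⟩
  simp only [mem_inter_iff, mem_prod, mem_ofPred_eq, mem_singleton_iff, Prod.mk.injEq,
    Subtype.mk.injEq]
  constructor
  · rintro ⟨⟨⟨ha'a, ha'b⟩, hb'b⟩, hab'P⟩
    by_contra hne
    rcases hP.2 hab'P hab (by simpa using hne) with ⟨hb'a, -⟩ | ⟨hba', hcoh⟩
    · exact (le_of_mem_Wset ha'a).not_gt ((hP.1 _ hab'P).2.2.trans hb'a)
    · have hbb' : b < b' := hba'.trans (hP.1 _ hab'P).2.2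
      rw [mem_Wset_iff_of_lt hba' (hX ha'), hcoh, ← mem_Wset_iff_of_lt hbb' (hX hb')] at ha'b
      exact ha'b hb'b
  · rintro ⟨rfl, rfl⟩
    exact ⟨⟨⟨mem_Wset_self o _, fun h => (le_of_mem_Wset h).not_gt hab'⟩, mem_Wset_self o _⟩,
      hab⟩

end Topology

/-- **Theorem (Moore).** Let `o : [ω₁]² → ω` be such that every level of the
tree `T(o) = {o(·,β) ↾ α : α ≤ β < ω₁}` is countable, and let
`c(α,β) = o(α,β) mod 2`.  Then for every uncountable `X ⊆ ω₁` the square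
`(X, τ[X]) × (X, τ[X])` contains an uncountable discrete subspace. -/
theorem statement19 (o : Ordinal → Ordinal → ℕ)
    -- every level of `T(o)` is countable:
    (hlev : ∀ α < omega1,
      {g : ↥(Set.Iio α) → ℕ |
        ∃ β : Ordinal, α ≤ β ∧ β < omega1 ∧
          ∀ ξ : ↥(Set.Iio α), g ξ = o ξ.val β}.Countable)
    (X : Set Ordinal) (hX : X ⊆ Set.Iio omega1) (hXu : ¬ X.Countable) :
    letI : TopologicalSpace X := tauTop o X
    ∃ D : Set (X × X), ¬ D.Countable ∧ DiscreteTopology D := by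
  obtain ⟨P, hP, hPu⟩ := exists_uncountable_isCoherentFamily hlev hX hXu
  let val₂ : X × X → Ordinal × Ordinal := fun d => (d.1.val, d.2.val)
  have hPrange : P ⊆ range val₂ := fun p hp =>
    ⟨(⟨p.1, (hP.1 p hp).1⟩, ⟨p.2, (hP.1 p hp).2.1⟩), rfl⟩
  refine ⟨val₂ ⁻¹' P, fun hD => hPu ?_, hP.discreteTopology hX⟩
  rw [← image_preimage_eq_of_subset hPrange]
  exact hD.image val₂
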